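/- Let k be a field of characteristic zero, let Ω₁ and Ω₂ be finite-dimensional k-vector spaces, let ⋆ᵢ ∈ Ωᵢ, let Λᵢ be a subspace of (Ωᵢ⊗Ωᵢ) ⊕ (Ωᵢ⊗Ωᵢ), and let (αᵢ, βᵢ) be a unit action for ⋆ᵢ that is coherent with Λᵢ, for i = 1, 2. Then (α₁⊗α₂, β₁⊗β₂) is a unit action for ⋆₁⊗⋆₂ ∈ Ω₁⊗Ω₂ that is coherent with the black square product Λ₁ ⊠ Λ₂ ⊆ ((Ω₁⊗Ω₂)⊗(Ω₁⊗Ω₂)) ⊕ ((Ω₁⊗Ω₂)⊗(Ω₁⊗Ω₂)). -/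
import Mathlib


open TensorProduct

section Defs

variable {k : Type*} [Field k]

noncomputable def contrL {Ω : Type*} [AddCommGroup Ω] [Module k Ω]
    (φ : Module.Dual k Ω) : Ω ⊗[k] Ω →ₗ[k] Ω :=
  (TensorProduct.lid k Ω).toLinearMap ∘ₗ TensorProduct.map φ LinearMap.id

noncomputable def contrR {Ω : Type*} [AddCommGroup Ω] [Module k Ω]
    (φ : Module.Dual k Ω) : Ω ⊗[k] Ω →ₗ[k] Ω :=
  (TensorProduct.rid k Ω).toLinearMap ∘ₗ TensorProduct.map LinearMap.id φ

noncomputable def contrB {Ω₁ Ω₂ : Type*} [AddCommGroup Ω₁] [Module k Ω₁]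
    [AddCommGroup Ω₂] [Module k Ω₂]
    (φ : Module.Dual k Ω₁) (ψ : Module.Dual k Ω₂) : Ω₁ ⊗[k] Ω₂ →ₗ[k] k :=
  (TensorProduct.lid k k).toLinearMap ∘ₗ TensorProduct.map φ ψ

/-- The coherence equations (C1)-(C5) for a pair `uv ∈ (Ω⊗Ω) × (Ω⊗Ω)`. -/
def CoherenceEqs {Ω : Type*} [AddCommGroup Ω] [Module k Ω]
    (α β : Module.Dual k Ω) (star : Ω)
    (uv : (Ω ⊗[k] Ω) × (Ω ⊗[k] Ω)) : Prop :=
  contrL β uv.1 = contrL β uv.2 ∧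
  contrL α uv.1 = contrR β uv.2 ∧
  contrR α uv.1 = contrR α uv.2 ∧
  contrR β uv.1 = contrB β β uv.2 • star ∧
  contrB α α uv.1 • star = contrL α uv.2

/-- The compatibility equations (C1)-(C3). -/
def CompatEqs {Ω : Type*} [AddCommGroup Ω] [Module k Ω]
    (α β : Module.Dual k Ω)
    (uv : (Ω ⊗[k] Ω) × (Ω ⊗[k] Ω)) : Prop :=
  contrL β uv.1 = contrL β uv.2 ∧
  contrL α uv.1 = contrR β uv.2 ∧
  contrR α uv.1 = contrR α uv.2

def IsCoherent {Ω : Type*} [AddCommGroup Ω] [Module k Ω]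
    (α β : Module.Dual k Ω) (star : Ω)
    (Λ : Submodule k ((Ω ⊗[k] Ω) × (Ω ⊗[k] Ω))) : Prop :=
  ∀ uv ∈ Λ, CoherenceEqs α β star uv

def IsCompatible {Ω : Type*} [AddCommGroup Ω] [Module k Ω]
    (α β : Module.Dual k Ω)
    (Λ : Submodule k ((Ω ⊗[k] Ω) × (Ω ⊗[k] Ω))) : Prop :=
  ∀ uv ∈ Λ, CompatEqs α β uv

end Defs

/-- The black square product of two relation spaces. -/
noncomputable def blackSquare {k : Type*} [Field k]
    {Ω₁ Ω₂ : Type*} [AddCommGroup Ω₁] [Module k Ω₁] [AddCommGroup Ω₂] [Module k Ω₂]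
    (Λ₁ : Submodule k ((Ω₁ ⊗[k] Ω₁) × (Ω₁ ⊗[k] Ω₁)))
    (Λ₂ : Submodule k ((Ω₂ ⊗[k] Ω₂) × (Ω₂ ⊗[k] Ω₂))) :
    Submodule k
      (((Ω₁ ⊗[k] Ω₂) ⊗[k] (Ω₁ ⊗[k] Ω₂)) × ((Ω₁ ⊗[k] Ω₂) ⊗[k] (Ω₁ ⊗[k] Ω₂))) :=
  Submodule.span k
    {x | ∃ p₁ ∈ Λ₁, ∃ p₂ ∈ Λ₂,
      x = (TensorProduct.tensorTensorTensorComm k Ω₁ Ω₁ Ω₂ Ω₂ (p₁.1 ⊗ₜ[k] p₂.1),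
           TensorProduct.tensorTensorTensorComm k Ω₁ Ω₁ Ω₂ Ω₂ (p₁.2 ⊗ₜ[k] p₂.2))}


section Aux
variable {k : Type*} [Field k]
variable {Ω₁ Ω₂ : Type*} [AddCommGroup Ω₁] [Module k Ω₁] [AddCommGroup Ω₂] [Module k Ω₂]

@[simp] lemma contrL_tmul (φ : Module.Dual k Ω₁) (a b : Ω₁) :
    contrL φ (a ⊗ₜ[k] b) = φ a • b := by simp [contrL]

@[simp] lemma contrR_tmul (φ : Module.Dual k Ω₁) (a b : Ω₁) :
    contrR φ (a ⊗ₜ[k] b) = φ b • a := by simp [contrR]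

@[simp] lemma contrB_tmul (φ : Module.Dual k Ω₁) (ψ : Module.Dual k Ω₂) (a : Ω₁) (b : Ω₂) :
    contrB φ ψ (a ⊗ₜ[k] b) = φ a * ψ b := by simp [contrB, smul_eq_mul]

lemma keyL (φ₁ : Module.Dual k Ω₁) (φ₂ : Module.Dual k Ω₂) (u₁ : Ω₁ ⊗[k] Ω₁) (u₂ : Ω₂ ⊗[k] Ω₂) :
    contrL (contrB φ₁ φ₂) (tensorTensorTensorComm k Ω₁ Ω₁ Ω₂ Ω₂ (u₁ ⊗ₜ[k] u₂)) =
      contrL φ₁ u₁ ⊗ₜ[k] contrL φ₂ u₂ := by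
  have : (contrL (contrB φ₁ φ₂) ∘ₗ (tensorTensorTensorComm k Ω₁ Ω₁ Ω₂ Ω₂).toLinearMap)
      = TensorProduct.map (contrL φ₁) (contrL φ₂) := by
    apply TensorProduct.ext_fourfold'
    intro a b c d
    simp [TensorProduct.smul_tmul_smul, smul_tmul', smul_smul, mul_comm]
  exact LinearMap.congr_fun this (u₁ ⊗ₜ u₂) |>.trans (by simp)

lemma keyR (φ₁ : Module.Dual k Ω₁) (φ₂ : Module.Dual k Ω₂) (u₁ : Ω₁ ⊗[k] Ω₁) (u₂ : Ω₂ ⊗[k] Ω₂) :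
    contrR (contrB φ₁ φ₂) (tensorTensorTensorComm k Ω₁ Ω₁ Ω₂ Ω₂ (u₁ ⊗ₜ[k] u₂)) =
      contrR φ₁ u₁ ⊗ₜ[k] contrR φ₂ u₂ := by
  have : (contrR (contrB φ₁ φ₂) ∘ₗ (tensorTensorTensorComm k Ω₁ Ω₁ Ω₂ Ω₂).toLinearMap)
      = TensorProduct.map (contrR φ₁) (contrR φ₂) := by
    apply TensorProduct.ext_fourfold'
    intro a b c d
    simp [TensorProduct.smul_tmul_smul, smul_tmul', smul_smul, mul_comm]
  exact LinearMap.congr_fun this (u₁ ⊗ₜ u₂) |>.trans (by simp)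

lemma keyB (φ₁ ψ₁ : Module.Dual k Ω₁) (φ₂ ψ₂ : Module.Dual k Ω₂)
    (u₁ : Ω₁ ⊗[k] Ω₁) (u₂ : Ω₂ ⊗[k] Ω₂) :
    contrB (contrB φ₁ φ₂) (contrB ψ₁ ψ₂) (tensorTensorTensorComm k Ω₁ Ω₁ Ω₂ Ω₂ (u₁ ⊗ₜ[k] u₂)) =
      contrB φ₁ ψ₁ u₁ * contrB φ₂ ψ₂ u₂ := by
  have : (contrB (contrB φ₁ φ₂) (contrB ψ₁ ψ₂) ∘ₗ
        (tensorTensorTensorComm k Ω₁ Ω₁ Ω₂ Ω₂).toLinearMap)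
      = LinearMap.mul' k k ∘ₗ TensorProduct.map (contrB φ₁ ψ₁) (contrB φ₂ ψ₂) := by
    apply TensorProduct.ext_fourfold'
    intro a b c d
    simp; ring
  simpa using LinearMap.congr_fun this (u₁ ⊗ₜ u₂)

end Aux

/-- Coherent unit actions are preserved by the black square product (Theorem 4.2). -/
theorem blackSquare_coherent
    {k : Type*} [Field k] [CharZero k]
    {Ω₁ Ω₂ : Type*} [AddCommGroup Ω₁] [Module k Ω₁] [FiniteDimensional k Ω₁]
    [AddCommGroup Ω₂] [Module k Ω₂] [FiniteDimensional k Ω₂]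
    (star₁ : Ω₁) (star₂ : Ω₂)
    (Λ₁ : Submodule k ((Ω₁ ⊗[k] Ω₁) × (Ω₁ ⊗[k] Ω₁)))
    (Λ₂ : Submodule k ((Ω₂ ⊗[k] Ω₂) × (Ω₂ ⊗[k] Ω₂)))
    (α₁ β₁ : Module.Dual k Ω₁) (α₂ β₂ : Module.Dual k Ω₂)
    (hα₁ : α₁ star₁ = 1) (hβ₁ : β₁ star₁ = 1)
    (hα₂ : α₂ star₂ = 1) (hβ₂ : β₂ star₂ = 1)
    (h₁ : IsCoherent α₁ β₁ star₁ Λ₁) (h₂ : IsCoherent α₂ β₂ star₂ Λ₂) :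
    contrB α₁ α₂ (star₁ ⊗ₜ[k] star₂) = 1 ∧
    contrB β₁ β₂ (star₁ ⊗ₜ[k] star₂) = 1 ∧
    IsCoherent (contrB α₁ α₂) (contrB β₁ β₂) (star₁ ⊗ₜ[k] star₂)
      (blackSquare Λ₁ Λ₂) := by
  refine ⟨by simp [hα₁, hα₂], by simp [hβ₁, hβ₂], ?_⟩
  intro uv huv
  induction huv using Submodule.span_induction with
  | mem x hx =>
    obtain ⟨p₁, hp₁, p₂, hp₂, rfl⟩ := hx
    obtain ⟨a1, a2, a3, a4, a5⟩ := h₁ p₁ hp₁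
    obtain ⟨b1, b2, b3, b4, b5⟩ := h₂ p₂ hp₂
    refine ⟨?_, ?_, ?_, ?_, ?_⟩
    · simp only [keyL, a1, b1]
    · simp only [keyL, keyR, a2, b2]
    · simp only [keyR, a3, b3]
    · simp only [keyR, keyB, a4, b4, TensorProduct.smul_tmul_smul]
    · simp only [keyL, keyB, ← a5, ← b5, TensorProduct.smul_tmul_smul]
  | zero => refine ⟨?_, ?_, ?_, ?_, ?_⟩ <;> simp
  | add x y hx hy ihx ihy =>
    obtain ⟨a1, a2, a3, a4, a5⟩ := ihx
    obtain ⟨b1, b2, b3, b4, b5⟩ := ihy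
    refine ⟨?_, ?_, ?_, ?_, ?_⟩ <;>
      simp [Prod.fst_add, Prod.snd_add, map_add, add_smul,
        a1, a2, a3, a4, a5, b1, b2, b3, b4, b5]
  | smul c x hx ih =>
    obtain ⟨a1, a2, a3, a4, a5⟩ := ih
    refine ⟨?_, ?_, ?_, ?_, ?_⟩
    · simp [a1]
    · simp [a2]
    · simp [a3]
    · simp [a4, smul_smul]
    · simp [← a5, smul_smul]
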